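/- The 1-D FID-estimator ordering reversal: let P₁ = N(0, (1 − 1/m)²), P₂ = Q = N(0,1). Then FID(P₁,Q) = 1/m² > 0 = FID(P₂,Q), but for m ≥ 2 the expected plug-in estimates satisfy E_{X∼P₁^m}[FID(P̂_X, Q)] < E_{Y∼P₂^m}[FID(P̂_Y, Q)], since the difference equals (1/m)(1/m² − 1/m + 2(d_m − 1)) < 0, using d_m < 1 and 1/m² < 1/m for m ≥ 2. -/

import Mathlib

open MeasureTheory ProbabilityTheory

/-! If `Z` has law `N(0,1)^m` and `σ = 1 - 1/m`, then `σ Z` has law `P₁^m`. For any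
square-integrable law, `E[μ̂²] = E[X]² + Var/m` and `E[σ̂²] = Var` (unbiasedness), while `σ̂`
scales linearly, so `E[σ̂(σ Z)] = σ d` with `d = E[σ̂(Z)]`. The two expected estimates then differ
by `u (u² - u + 2 (d - 1))` with `u = 1/m`, which is negative since `u < 1` and `d ≤ 1` by
Jensen's inequality for the concave square root. -/

/-- The sample mean of `m` observations. -/
noncomputable def sampleMean {m : ℕ} (x : Fin m → ℝ) : ℝ := (∑ i, x i) / m

/-- The unbiased sample variance of `m` observations. -/
noncomputable def sampleVar {m : ℕ} (x : Fin m → ℝ) : ℝ :=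
  (∑ i, (x i - sampleMean x) ^ 2) / ((m : ℝ) - 1)

/-- The plug-in FID estimate against the known target `Q = N(0,1)`:
`μ̂² + σ̂² + 1 - 2σ̂`. -/
noncomputable def fidEst {m : ℕ} (x : Fin m → ℝ) : ℝ :=
  (sampleMean x) ^ 2 + sampleVar x + 1 - 2 * Real.sqrt (sampleVar x)

/-- The 1-D FID between Gaussians `N(μ₁,σ₁²)` and `N(μ₂,σ₂²)`. -/
noncomputable def fid1D (μ₁ σ₁ μ₂ σ₂ : ℝ) : ℝ := (μ₁ - μ₂) ^ 2 + (σ₁ - σ₂) ^ 2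

section SampleStatistics

variable {m : ℕ}

lemma sampleMean_const_mul (c : ℝ) (x : Fin m → ℝ) :
    sampleMean (fun i => c * x i) = c * sampleMean x := by
  simp only [sampleMean, ← Finset.mul_sum, mul_div_assoc]

lemma sampleVar_const_mul (c : ℝ) (x : Fin m → ℝ) :
    sampleVar (fun i => c * x i) = c ^ 2 * sampleVar x := by
  simp only [sampleVar, sampleMean_const_mul, ← mul_sub, mul_pow, ← Finset.mul_sum,
    mul_div_assoc]

lemma sampleVar_nonneg (x : Fin m → ℝ) : 0 ≤ sampleVar x := by
  rcases Nat.eq_zero_or_pos m with rfl | hm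
  · simp [sampleVar]
  · have : (1 : ℝ) ≤ m := by exact_mod_cast hm
    exact div_nonneg (Finset.sum_nonneg fun i _ => sq_nonneg _) (by linarith)

lemma sum_sq_sub_sampleMean (x : Fin m → ℝ) :
    ∑ i, (x i - sampleMean x) ^ 2 = ∑ i, x i ^ 2 - m * sampleMean x ^ 2 := by
  have hsum : ∑ i, x i = m * sampleMean x := by
    rcases eq_or_ne m 0 with rfl | hm
    · simp
    · rw [sampleMean, mul_div_cancel₀ _ (by exact_mod_cast hm)]
  simp only [sub_sq, Finset.sum_add_distrib, Finset.sum_sub_distrib, ← Finset.sum_mul,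
    ← Finset.mul_sum, hsum, Finset.sum_const, Finset.card_univ, Fintype.card_fin, nsmul_eq_mul]
  ring

lemma continuous_sampleVar : Continuous (sampleVar : (Fin m → ℝ) → ℝ) := by
  unfold sampleVar sampleMean
  fun_prop

end SampleStatistics

section ProductMoments

variable {m : ℕ} {μ : Measure ℝ} [IsProbabilityMeasure μ]

lemma memLp_eval_pi (hμ : MemLp id 2 μ) (i : Fin m) :
    MemLp (fun x : Fin m → ℝ => x i) 2 (Measure.pi fun _ => μ) :=
  hμ.comp_measurePreserving (measurePreserving_eval _ i)

lemma memLp_sum_pi (hμ : MemLp id 2 μ) :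
    MemLp (fun x : Fin m → ℝ => ∑ i, x i) 2 (Measure.pi fun _ => μ) :=
  memLp_finsetSum _ fun i _ => memLp_eval_pi hμ i

lemma integral_sq_eval_pi (i : Fin m) :
    ∫ x : Fin m → ℝ, x i ^ 2 ∂(Measure.pi fun _ => μ) = ∫ y, y ^ 2 ∂μ :=
  integral_comp_eval (μ := fun _ => μ) (f := fun y : ℝ => y ^ 2) (by fun_prop)

lemma integrable_sum_sq_pi (hμ : MemLp id 2 μ) :
    Integrable (fun x : Fin m → ℝ => ∑ i, x i ^ 2) (Measure.pi fun _ => μ) :=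
  integrable_finsetSum _ fun i _ => (memLp_eval_pi hμ i).integrable_sq

lemma integral_sum_sq_pi (hμ : MemLp id 2 μ) :
    ∫ x : Fin m → ℝ, ∑ i, x i ^ 2 ∂(Measure.pi fun _ => μ)
      = m * ((∫ y, y ∂μ) ^ 2 + Var[id; μ]) := by
  rw [integral_finsetSum _ fun i _ => (memLp_eval_pi hμ i).integrable_sq]
  simp only [integral_sq_eval_pi, Finset.sum_const, Finset.card_univ, Fintype.card_fin,
    nsmul_eq_mul, variance_eq_sub hμ]
  simp [Pi.pow_apply]

lemma integral_sq_sum_pi (hμ : MemLp id 2 μ) :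
    ∫ x : Fin m → ℝ, (∑ i, x i) ^ 2 ∂(Measure.pi fun _ => μ)
      = (m * ∫ y, y ∂μ) ^ 2 + m * Var[id; μ] := by
  have hmean : ∫ x : Fin m → ℝ, ∑ i, x i ∂(Measure.pi fun _ => μ) = m * ∫ y, y ∂μ := by
    rw [integral_finsetSum _ fun i _ => (memLp_eval_pi hμ i).integrable one_le_two]
    simp [integral_eval]
  have hvar :
      Var[fun x : Fin m → ℝ => ∑ i, x i; Measure.pi fun _ => μ] = m * Var[id; μ] := by
    have := variance_sum_pi (μ := fun _ : Fin m => μ) (X := fun _ => id) fun _ => hμ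
    simp only [Finset.sum_const, Finset.card_univ, Fintype.card_fin, nsmul_eq_mul] at this
    rw [← this]
    congr 1
    ext x
    simp
  rw [← hmean, ← hvar, variance_eq_sub (memLp_sum_pi hμ)]
  simp [Pi.pow_apply]

lemma memLp_sampleMean_pi (hμ : MemLp id 2 μ) :
    MemLp (fun x : Fin m → ℝ => sampleMean x) 2 (Measure.pi fun _ => μ) := by
  simpa [sampleMean, div_eq_mul_inv] using (memLp_sum_pi hμ).mul_const (m : ℝ)⁻¹

lemma integral_sampleMean_sq_pi (hμ : MemLp id 2 μ) (hm : m ≠ 0) :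
    ∫ x : Fin m → ℝ, sampleMean x ^ 2 ∂(Measure.pi fun _ => μ)
      = (∫ y, y ∂μ) ^ 2 + Var[id; μ] / m := by
  simp only [sampleMean, div_pow]
  rw [integral_div, integral_sq_sum_pi hμ]
  field_simp

lemma integrable_sampleVar_pi (hμ : MemLp id 2 μ) :
    Integrable (fun x : Fin m → ℝ => sampleVar x) (Measure.pi fun _ => μ) := by
  simpa only [sampleVar, sum_sq_sub_sampleMean, Pi.sub_apply] using ((integrable_sum_sq_pi hμ).sub
    ((memLp_sampleMean_pi hμ).integrable_sq.const_mul _)).div_const _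

theorem integral_sampleVar_pi (hμ : MemLp id 2 μ) (hm : 1 < m) :
    ∫ x : Fin m → ℝ, sampleVar x ∂(Measure.pi fun _ => μ) = Var[id; μ] := by
  have hm' : (m : ℝ) - 1 ≠ 0 := sub_ne_zero.2 (by exact_mod_cast hm.ne')
  simp only [sampleVar, sum_sq_sub_sampleMean]
  rw [integral_div, integral_sub (integrable_sum_sq_pi hμ)
      ((memLp_sampleMean_pi hμ).integrable_sq.const_mul _),
    integral_const_mul, integral_sum_sq_pi hμ, integral_sampleMean_sq_pi hμ (by omega)]
  field_simp
  ring

lemma integrable_sqrt_sampleVar_pi (hμ : MemLp id 2 μ) :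
    Integrable (fun x : Fin m → ℝ => √(sampleVar x)) (Measure.pi fun _ => μ) := by
  refine ((memLp_two_iff_integrable_sq
    continuous_sampleVar.sqrt.aestronglyMeasurable).2 ?_).integrable one_le_two
  simpa only [Real.sq_sqrt (sampleVar_nonneg _)] using integrable_sampleVar_pi hμ

theorem integral_sqrt_sampleVar_pi_le (hμ : MemLp id 2 μ) (hm : 1 < m) :
    ∫ x : Fin m → ℝ, √(sampleVar x) ∂(Measure.pi fun _ => μ) ≤ √(Var[id; μ]) := by
  rw [← integral_sampleVar_pi hμ hm]
  exact Real.strictConcaveOn_sqrt.concaveOn.le_map_integral Real.continuous_sqrt.continuousOn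
    isClosed_Ici (.of_forall fun x => sampleVar_nonneg x) (integrable_sampleVar_pi hμ)
    (integrable_sqrt_sampleVar_pi hμ)

lemma integral_sqrt_sampleVar_pi_map_const_mul {c : ℝ} (hc : 0 ≤ c) :
    ∫ x : Fin m → ℝ, √(sampleVar x) ∂(Measure.pi fun _ => μ.map (c * ·))
      = c * ∫ x : Fin m → ℝ, √(sampleVar x) ∂(Measure.pi fun _ => μ) := by
  rw [← Measure.pi_map_pi fun _ => (measurable_const_mul c).aemeasurable,
    integral_map (Measurable.aemeasurable (by fun_prop))
    continuous_sampleVar.sqrt.aestronglyMeasurable, ← integral_const_mul]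
  simp only [sampleVar_const_mul, Real.sqrt_mul (sq_nonneg c), Real.sqrt_sq hc]

theorem integral_fidEst_pi (hμ : MemLp id 2 μ) (hm : 1 < m) :
    ∫ x : Fin m → ℝ, fidEst x ∂(Measure.pi fun _ => μ)
      = (∫ y, y ∂μ) ^ 2 + Var[id; μ] / m + Var[id; μ] + 1
        - 2 * ∫ x : Fin m → ℝ, √(sampleVar x) ∂(Measure.pi fun _ => μ) := by
  have hmean := (memLp_sampleMean_pi (m := m) hμ).integrable_sq
  have hvar := integrable_sampleVar_pi (m := m) hμ
  simp only [fidEst]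
  rw [integral_sub ((hmean.fun_add hvar).fun_add (integrable_const 1))
      ((integrable_sqrt_sampleVar_pi hμ).const_mul 2),
    integral_add (hmean.fun_add hvar) (integrable_const 1), integral_add hmean hvar,
    integral_const_mul, integral_sampleMean_sq_pi hμ (by omega), integral_sampleVar_pi hμ hm]
  simp

end ProductMoments

theorem integral_fidEst_pi_gaussianReal {m : ℕ} (hm : 1 < m) {σ : ℝ} (hσ : 0 ≤ σ) :
    ∫ x : Fin m → ℝ, fidEst x ∂(Measure.pi fun _ => gaussianReal 0 (σ ^ 2).toNNReal)
      = σ ^ 2 / m + σ ^ 2 + 1 - 2 * σ *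
          ∫ x : Fin m → ℝ, √(sampleVar x) ∂(Measure.pi fun _ => gaussianReal 0 1) := by
  have hscale : gaussianReal 0 (σ ^ 2).toNNReal = (gaussianReal 0 1).map (σ * ·) := by
    rw [gaussianReal_map_const_mul]
    simp [Real.toNNReal_of_nonneg (sq_nonneg σ)]
  rw [integral_fidEst_pi (memLp_id_gaussianReal 2) hm, hscale,
    integral_sqrt_sampleVar_pi_map_const_mul hσ, ← hscale]
  simp only [integral_id_gaussianReal, variance_id_gaussianReal, Real.coe_toNNReal _ (sq_nonneg σ)]
  ring

theorem fid_estimator_ordering_reversal (m : ℕ) (hm : 2 ≤ m) :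
    fid1D 0 (1 - 1 / (m : ℝ)) 0 1 = 1 / (m : ℝ) ^ 2
      ∧ fid1D 0 1 0 1 = 0
      ∧ (0 : ℝ) < 1 / (m : ℝ) ^ 2
      ∧ (∫ x : Fin m → ℝ, fidEst x
            ∂(Measure.pi fun _ : Fin m => gaussianReal 0 ((1 - 1 / (m : ℝ)) ^ 2).toNNReal))
        < ∫ x : Fin m → ℝ, fidEst x ∂(Measure.pi fun _ : Fin m => gaussianReal 0 1) := by
  refine ⟨by simp only [fid1D]; field_simp; ring, by simp [fid1D], by positivity, ?_⟩
  set u : ℝ := 1 / m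
  have hu : 0 < u := by positivity
  have hu' : u < 1 := by rw [div_lt_one (by positivity)]; exact_mod_cast hm
  have hB := integral_sqrt_sampleVar_pi_le (memLp_id_gaussianReal (μ := 0) (v := 1) 2) hm
  have hQ := integral_fidEst_pi_gaussianReal hm zero_le_one
  rw [one_pow, Real.toNNReal_one] at hQ
  rw [integral_fidEst_pi_gaussianReal hm (sub_nonneg.2 hu'.le), hQ]
  set B := ∫ x : Fin m → ℝ, √(sampleVar x) ∂(Measure.pi fun _ => gaussianReal 0 1)
  rw [variance_id_gaussianReal, NNReal.coe_one, Real.sqrt_one] at hB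
  have hdiff :
      (1 - u) ^ 2 / m + (1 - u) ^ 2 + 1 - 2 * (1 - u) * B - (1 / m + 1 + 1 - 2 * 1 * B)
        = u * (2 * (B - 1)) + u * (u * (u - 1)) := by
    simp only [u]; field_simp; ring
  nlinarith [mul_nonpos_of_nonneg_of_nonpos hu.le (by linarith : 2 * (B - 1) ≤ 0),
    mul_neg_of_pos_of_neg hu (mul_neg_of_pos_of_neg hu (sub_neg.2 hu'))]
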